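/- Let K be a field and let α, β ∈ ℕ^{2ℓ} have disjoint supports (for every index i, α_i = 0 or β_i = 0). If ψ₀([α] − [β]) = 0, then β = α̂ (i.e., β_i = α_{2ℓ+1−i} for all i) and α ∈ M (i.e., ζ·α = 0). -/

import Mathlib

open MvPolynomial

noncomputable section

/-- Index in `Fin (2*ℓ)` of the coefficient `a_k` (0-indexed position `k`). -/
def aIdx (l : ℕ) (k : Fin l) : Fin (2 * l) :=
  ⟨(k : ℕ), by have := k.isLt; omega⟩

/-- Index in `Fin (2*ℓ)` of the coefficient `b_k` (0-indexed position `2ℓ-1-k`),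
    matching the ordering `(a₁,…,a_ℓ, b_ℓ,…,b₁)`. -/
def bIdx (l : ℕ) (k : Fin l) : Fin (2 * l) :=
  ⟨2 * l - 1 - (k : ℕ), by have := k.isLt; omega⟩

/-- The vector `ζ = (p₁−q₁, …, p_ℓ−q_ℓ, q_ℓ−p_ℓ, …, q₁−p₁)`. -/
def zeta {l : ℕ} (p : Fin l → ℤ) (q : Fin l → ℕ) : Fin (2 * l) → ℤ := fun i =>
  if h : (i : ℕ) < l then p ⟨(i : ℕ), h⟩ - (q ⟨(i : ℕ), h⟩ : ℤ)
  else (q ⟨2 * l - 1 - (i : ℕ), by have := i.isLt; omega⟩ : ℤ) -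
    p ⟨2 * l - 1 - (i : ℕ), by have := i.isLt; omega⟩

/-- Dot product of an integer vector with a vector of natural numbers. -/
def zdot {n : ℕ} (z : Fin n → ℤ) (v : Fin n → ℕ) : ℤ := ∑ i, z i * (v i : ℤ)

/-- Reversal (involution) of a vector: `ν̂ = (ν_{2ℓ}, …, ν₁)`. -/
def revVec {n : ℕ} {α : Type*} (v : Fin n → α) : Fin n → α := fun i => v i.rev

/-- The monomial `[ν] = a₁^{ν₁}⋯a_ℓ^{ν_ℓ}·b_ℓ^{ν_{ℓ+1}}⋯b₁^{ν_{2ℓ}}` in the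
    polynomial ring in `2ℓ` variables. -/
def monX {K : Type*} [CommSemiring K] {n : ℕ} (v : Fin n → ℕ) :
    MvPolynomial (Fin n) K :=
  ∏ i, (X i) ^ (v i)

/-- Time-reversibility of the coefficient vector `x = (a,b)`: there is `γ ≠ 0`
    with `b_k = γ^{p_k−q_k}·a_k` for all `k`. -/
def TimeRev {K : Type*} [Field K] {l : ℕ} (p : Fin l → ℤ) (q : Fin l → ℕ)
    (x : Fin (2 * l) → K) : Prop :=
  ∃ γ : K, γ ≠ 0 ∧ ∀ k : Fin l, x (bIdx l k) = γ ^ (p k - (q k : ℤ)) * x (aIdx l k)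

/-- The Sibirsky ideal `I_S = ⟨[ν] − [ν̂] : ν ∈ M⟩`. -/
def sibirsky (K : Type*) [CommRing K] {l : ℕ} (p : Fin l → ℤ) (q : Fin l → ℕ) :
    Ideal (MvPolynomial (Fin (2 * l)) K) :=
  Ideal.span {f | ∃ v : Fin (2 * l) → ℕ,
    zdot (zeta p q) v = 0 ∧ f = monX v - monX (revVec v)}

/-- The homomorphism `ψ₀ : K[a₁,…,a_ℓ,b_ℓ,…,b₁] → K(γ,t₁,…,t_ℓ)`,
    `a_k ↦ t_k`, `b_k ↦ γ^{p_k−q_k}·t_k`; here `γ` is the image of `X 0` and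
    `t_k` the image of `X k.succ` in the fraction field of `K[X₀,…,X_ℓ]`. -/
def psi0 {K : Type*} [Field K] {l : ℕ} (p : Fin l → ℤ) (q : Fin l → ℕ) :
    MvPolynomial (Fin (2 * l)) K →ₐ[K] FractionRing (MvPolynomial (Fin (l + 1)) K) :=
  aeval fun i =>
    if h : (i : ℕ) < l then
      algebraMap (MvPolynomial (Fin (l + 1)) K)
        (FractionRing (MvPolynomial (Fin (l + 1)) K)) (X (Fin.succ ⟨(i : ℕ), h⟩))
    else
      (algebraMap (MvPolynomial (Fin (l + 1)) K)
          (FractionRing (MvPolynomial (Fin (l + 1)) K)) (X 0)) ^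
        (p ⟨2 * l - 1 - (i : ℕ), by have := i.isLt; omega⟩ -
          (q ⟨2 * l - 1 - (i : ℕ), by have := i.isLt; omega⟩ : ℤ)) *
      algebraMap (MvPolynomial (Fin (l + 1)) K)
        (FractionRing (MvPolynomial (Fin (l + 1)) K))
        (X (Fin.succ ⟨2 * l - 1 - (i : ℕ), by have := i.isLt; omega⟩))

/-- The linear map `U_η`, multiplying the coordinate `a_k` by `η^{q_k−p_k}` and the
    coordinate `b_k` by `η^{p_k−q_k}`. -/
def Ueta {K : Type*} [Field K] {l : ℕ} (p : Fin l → ℤ) (q : Fin l → ℕ) (η : K)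
    (x : Fin (2 * l) → K) : Fin (2 * l) → K := fun i =>
  if h : (i : ℕ) < l then η ^ ((q ⟨(i : ℕ), h⟩ : ℤ) - p ⟨(i : ℕ), h⟩) * x i
  else η ^ (p ⟨2 * l - 1 - (i : ℕ), by have := i.isLt; omega⟩ -
    (q ⟨2 * l - 1 - (i : ℕ), by have := i.isLt; omega⟩ : ℤ)) * x i

/-- The orbit of `x` under the group `{U_η : η ≠ 0}`. -/
def orbitU {K : Type*} [Field K] {l : ℕ} (p : Fin l → ℤ) (q : Fin l → ℕ)
    (x : Fin (2 * l) → K) : Set (Fin (2 * l) → K) :=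
  {y | ∃ η : K, η ≠ 0 ∧ y = Ueta p q η x}

/-!
`ψ₀` sends the monomial `[ν]` to the Laurent monomial
`γ ^ (∑ k, (p_k - q_k) ν_{b_k}) * ∏ k, t_k ^ (ν_{a_k} + ν_{b_k})`, and distinct Laurent monomials
stay distinct in `K(γ, t)`. Hence `ψ₀[α] = ψ₀[β]` gives `α_{a_k} + α_{b_k} = β_{a_k} + β_{b_k}`
for every `k`; with disjoint supports this forces `β_{a_k} = α_{b_k}` and `β_{b_k} = α_{a_k}`,
i.e. `β = α̂`. Comparing the exponents of `γ` then reads `ζ · α = 0`.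
-/

lemma zpow_sum₀ {G : Type*} [CommGroupWithZero G] {a : G} (ha : a ≠ 0) {ι : Type*}
    (s : Finset ι) (f : ι → ℤ) : a ^ (∑ i ∈ s, f i) = ∏ i ∈ s, a ^ f i := by
  classical
  induction s using Finset.induction_on with
  | empty => simp
  | insert i s hi ih => rw [Finset.sum_insert hi, Finset.prod_insert hi, zpow_add₀ ha, ih]

lemma algebraMap_X_ne_zero {σ R : Type*} [CommRing R] [IsDomain R] (i : σ) :
    algebraMap (MvPolynomial σ R) (FractionRing (MvPolynomial σ R)) (X i) ≠ 0 :=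
  IsFractionRing.to_map_ne_zero_of_mem_nonZeroDivisors
    (mem_nonZeroDivisors_of_ne_zero (X_ne_zero i))

theorem prod_algebraMap_X_zpow_injective {σ R : Type*} [Fintype σ] [CommRing R] [IsDomain R] :
    Function.Injective fun e : σ → ℤ =>
      ∏ i, algebraMap (MvPolynomial σ R) (FractionRing (MvPolynomial σ R)) (X i) ^ e i := by
  intro e e' h
  set x : σ → FractionRing (MvPolynomial σ R) := fun i =>
    algebraMap (MvPolynomial σ R) _ (X i)
  have hmono : ∀ m : σ → ℕ, ∏ i, x i ^ m i =
      algebraMap _ _ (monomial (Finsupp.equivFunOnFinite.symm m) (1 : R)) := by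
    intro m
    rw [monomial_eq, C_1, one_mul, Finsupp.prod_fintype _ _ fun _ => pow_zero _]
    simp [x]
  -- clear denominators: multiply by `∏ x i ^ (e⁻ i + e'⁻ i)`, where `e⁻ = max (-e) 0`
  set n : σ → ℕ := fun i => (-e i).toNat + (-e' i).toNat
  have hclear : ∀ f : σ → ℤ, (∀ i, 0 ≤ f i + n i) →
      (∏ i, x i ^ f i) * ∏ i, x i ^ n i = ∏ i, x i ^ (f i + n i).toNat := by
    intro f hf
    rw [← Finset.prod_mul_distrib]
    refine Finset.prod_congr rfl fun i _ => ?_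
    rw [← zpow_natCast, ← zpow_natCast, ← zpow_add₀ (algebraMap_X_ne_zero i),
      Int.toNat_of_nonneg (hf i)]
  have h' : (∏ i, x i ^ e i) * ∏ i, x i ^ n i = (∏ i, x i ^ e' i) * ∏ i, x i ^ n i :=
    congrArg (· * ∏ i, x i ^ n i) h
  rw [hclear e fun i => by simp only [n]; omega, hclear e' fun i => by simp only [n]; omega,
    hmono, hmono] at h'
  have hn := Finsupp.equivFunOnFinite.symm.injective
    (monomial_left_injective one_ne_zero (IsFractionRing.injective _ _ h'))
  funext i
  have hni := congrFun hn i
  simp only [n] at hni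
  omega

section Indices

variable {l : ℕ}

lemma rev_aIdx (k : Fin l) : (aIdx l k).rev = bIdx l k :=
  Fin.ext (by simp only [aIdx, bIdx, Fin.val_rev]; omega)

lemma rev_bIdx (k : Fin l) : (bIdx l k).rev = aIdx l k := by
  rw [← rev_aIdx, Fin.rev_rev]

lemma revVec_aIdx {β : Type*} (v : Fin (2 * l) → β) (k : Fin l) :
    revVec v (aIdx l k) = v (bIdx l k) := by
  rw [revVec, rev_aIdx]

lemma revVec_bIdx {β : Type*} (v : Fin (2 * l) → β) (k : Fin l) :
    revVec v (bIdx l k) = v (aIdx l k) := by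
  rw [revVec, rev_bIdx]

lemma bijective_sumElim_aIdx_bIdx : Function.Bijective (Sum.elim (aIdx l) (bIdx l)) := by
  refine (Fintype.bijective_iff_injective_and_card _).2 ⟨?_, by simp [two_mul]⟩
  rintro (a | a) (b | b) h <;>
    simp only [Sum.elim_inl, Sum.elim_inr, aIdx, bIdx, Fin.ext_iff, Sum.inl.injEq,
      Sum.inr.injEq, reduceCtorEq] at h ⊢ <;> omega

lemma exists_eq_aIdx_or_exists_eq_bIdx (i : Fin (2 * l)) :
    (∃ k, i = aIdx l k) ∨ ∃ k, i = bIdx l k := by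
  obtain ⟨k | k, rfl⟩ := bijective_sumElim_aIdx_bIdx.2 i
  exacts [.inl ⟨k, rfl⟩, .inr ⟨k, rfl⟩]

@[to_additive]
lemma prod_aIdx_mul_prod_bIdx {M : Type*} [CommMonoid M] (g : Fin (2 * l) → M) :
    (∏ k, g (aIdx l k)) * ∏ k, g (bIdx l k) = ∏ i, g i := by
  calc _ = ∏ x, g (Sum.elim (aIdx l) (bIdx l) x) := (Fintype.prod_sum_type _).symm
    _ = ∏ i, g i := Fintype.prod_bijective _ bijective_sumElim_aIdx_bIdx _ _ fun _ => rfl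

end Indices

lemma eq_revVec_of_add_eq {l : ℕ} {α β : Fin (2 * l) → ℕ} (hsupp : ∀ i, α i = 0 ∨ β i = 0)
    (hsum : ∀ k, α (aIdx l k) + α (bIdx l k) = β (aIdx l k) + β (bIdx l k)) :
    β = revVec α := by
  funext i
  rcases exists_eq_aIdx_or_exists_eq_bIdx i with ⟨k, rfl⟩ | ⟨k, rfl⟩
  · rw [revVec_aIdx]
    have := hsupp (aIdx l k); have := hsupp (bIdx l k); have := hsum k
    omega
  · rw [revVec_bIdx]
    have := hsupp (aIdx l k); have := hsupp (bIdx l k); have := hsum k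
    omega

section Psi0

variable {K : Type*} [Field K] {l : ℕ} (p : Fin l → ℤ) (q : Fin l → ℕ)

lemma zeta_aIdx (k : Fin l) : zeta p q (aIdx l k) = p k - q k := by
  simp [zeta, aIdx]

lemma zeta_bIdx (k : Fin l) : zeta p q (bIdx l k) = q k - p k := by
  have hk := k.isLt
  have hb : ¬ ((bIdx l k : Fin (2 * l)) : ℕ) < l := by simp only [bIdx]; omega
  have hk' : 2 * l - 1 - ((bIdx l k : Fin (2 * l)) : ℕ) = k := by simp only [bIdx]; omega
  simp [zeta, hb, hk']

lemma zdot_zeta (ν : Fin (2 * l) → ℕ) :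
    zdot (zeta p q) ν = ∑ k, (p k - q k) * ((ν (aIdx l k) : ℤ) - ν (bIdx l k)) := by
  rw [zdot, ← sum_aIdx_add_sum_bIdx, ← Finset.sum_add_distrib]
  refine Finset.sum_congr rfl fun k _ => ?_
  rw [zeta_aIdx, zeta_bIdx]
  ring

lemma psi0_X_aIdx (k : Fin l) :
    psi0 (K := K) p q (X (aIdx l k)) =
      algebraMap (MvPolynomial (Fin (l + 1)) K) _ (X k.succ) := by
  simp [psi0, aIdx, Fin.ext_iff]

lemma psi0_X_bIdx (k : Fin l) :
    psi0 (K := K) p q (X (bIdx l k)) =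
      algebraMap (MvPolynomial (Fin (l + 1)) K) _ (X 0) ^ (p k - q k) *
        algebraMap (MvPolynomial (Fin (l + 1)) K) _ (X k.succ) := by
  have hk := k.isLt
  have hb : ¬ ((bIdx l k : Fin (2 * l)) : ℕ) < l := by simp only [bIdx]; omega
  have hk' : 2 * l - 1 - ((bIdx l k : Fin (2 * l)) : ℕ) = k := by simp only [bIdx]; omega
  simp [psi0, hb, hk', Fin.ext_iff]

def psi0Exponent (ν : Fin (2 * l) → ℕ) : Fin (l + 1) → ℤ :=
  Fin.cons (∑ k, (p k - q k) * (ν (bIdx l k) : ℤ))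
    fun k => ((ν (aIdx l k) + ν (bIdx l k) : ℕ) : ℤ)

lemma psi0_monX (ν : Fin (2 * l) → ℕ) :
    psi0 (K := K) p q (monX ν) =
      ∏ i, algebraMap (MvPolynomial (Fin (l + 1)) K) _ (X i) ^ psi0Exponent p q ν i := by
  have hγ := algebraMap_X_ne_zero (R := K) (0 : Fin (l + 1))
  rw [monX, map_prod, ← prod_aIdx_mul_prod_bIdx, Fin.prod_univ_succ]
  simp only [map_pow, psi0_X_aIdx, psi0_X_bIdx, psi0Exponent, Fin.cons_zero, Fin.cons_succ,
    mul_pow, Finset.prod_mul_distrib, zpow_sum₀ hγ, zpow_mul, zpow_natCast, pow_add]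
  ring

end Psi0

theorem stmt9_general {K : Type*} [Field K] {l : ℕ} (p : Fin l → ℤ) (q : Fin l → ℕ)
    (α β : Fin (2 * l) → ℕ) (hsupp : ∀ i, α i = 0 ∨ β i = 0)
    (h : psi0 (K := K) p q (monX α - monX β) = 0) :
    β = revVec α ∧ zdot (zeta p q) α = 0 := by
  have hexp : psi0Exponent p q α = psi0Exponent p q β :=
    prod_algebraMap_X_zpow_injective (by simpa only [psi0_monX, map_sub, sub_eq_zero] using h)
  obtain ⟨hγ, ht⟩ := Fin.cons_inj.1 hexp
  have hrev : β = revVec α :=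
    eq_revVec_of_add_eq hsupp fun k => by exact_mod_cast congrFun ht k
  refine ⟨hrev, ?_⟩
  simp only [hrev, revVec_bIdx] at hγ
  rw [zdot_zeta]
  simp only [mul_sub, Finset.sum_sub_distrib, hγ, sub_self]

theorem stmt9 {K : Type*} [Field K] {l : ℕ} (hl : 0 < l) (p : Fin l → ℤ) (q : Fin l → ℕ)
    (hp : ∀ k, -1 ≤ p k) (hpq : ∀ k, 0 ≤ p k + (q k : ℤ))
    (hdist : Function.Injective fun k => (p k, q k))
    (α β : Fin (2 * l) → ℕ) (hsupp : ∀ i, α i = 0 ∨ β i = 0)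
    (h : psi0 (K := K) p q (monX α - monX β) = 0) :
    β = revVec α ∧ zdot (zeta p q) α = 0 :=
  stmt9_general p q α β hsupp h
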